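/- arXiv:1411.3053 — 9 statements merged into one kernel-verified Lean document; each statement's English description precedes it below -/
import Mathlib

section
/- Let V1 and V2 be finite-dimensional real vector spaces, let F1 be a Minkowski norm on V1, let π : V1 → V2 be a surjective linear map, and let w ∈ V2 be a nonzero vector. Then the infimum inf { F1(v) | v ∈ V1, π(v) = w } is attained at a unique vector v ∈ V1 with π(v) = w; this vector is called the horizontal lift of w with respect to π. -/
/-- A Minkowski norm on a finite-dimensional real vector space. -/
structure IsMinkowskiNorm {V : Type*} [NormedAddCommGroup V] [NormedSpace ℝ V]
    (F : V → ℝ) : Prop where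
  continuous : Continuous F
  map_zero : F 0 = 0
  pos : ∀ y : V, y ≠ 0 → 0 < F y
  pos_homog : ∀ c : ℝ, 0 < c → ∀ y : V, F (c • y) = c * F y
  smooth : ContDiffOn ℝ (⊤ : ℕ∞) F {y | y ≠ 0}
  posdef : ∀ y : V, y ≠ 0 → ∀ u : V, u ≠ 0 →
    0 < (1 / 2 : ℝ) * iteratedFDeriv ℝ 2 (fun x => F x ^ 2) y ![u, u]

/-- Along a line avoiding the origin, the square of a Minkowski norm is strictly convex. -/
lemma minkowski_sq_strict_midpoint {V : Type*} [NormedAddCommGroup V] [NormedSpace ℝ V]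
    (F : V → ℝ) (hF : IsMinkowskiNorm F) {v1 v2 : V} (hne : v1 ≠ v2)
    (h0 : ∀ t : ℝ, v2 + t • (v1 - v2) ≠ 0) :
    F (v2 + (1/2 : ℝ) • (v1 - v2)) ^ 2 < (F v2 ^ 2 + F v1 ^ 2) / 2 := by
  set f : V → ℝ := fun x => F x ^ 2 with hf_def
  set u : V := v1 - v2 with hu_def
  have hu : u ≠ 0 := sub_ne_zero.2 hne
  set c : ℝ → V := fun t => v2 + t • u with hc_def
  set φ : ℝ → ℝ := fun t => f (c t) with hφ_def
  have hU : IsOpen {y : V | y ≠ 0} := isOpen_compl_singleton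
  have hfC : ContDiffOn ℝ (⊤ : ℕ∞) f {y : V | y ≠ 0} := hF.smooth.pow 2
  have hfA : ∀ t : ℝ, ContDiffAt ℝ (⊤ : ℕ∞) f (c t) := fun t =>
    hfC.contDiffAt (hU.mem_nhds (h0 t))
  have hcD : ∀ t : ℝ, HasDerivAt c u t := by
    intro t
    have := (((hasDerivAt_id t).smul_const u).const_add v2)
    simp only [one_smul] at this
    exact this
  -- first derivative
  have hφ' : ∀ t : ℝ, HasDerivAt φ (fderiv ℝ f (c t) u) t := by
    intro t
    exact (((hfA t).differentiableAt (by simp)).hasFDerivAt).comp_hasDerivAt t (hcD t)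
  have hderiv : deriv φ = fun t => fderiv ℝ f (c t) u := by
    funext t; exact (hφ' t).deriv
  -- second derivative
  have hg : ∀ t : ℝ, HasDerivAt (fun s => fderiv ℝ f (c s)) (fderiv ℝ (fderiv ℝ f) (c t) u) t := by
    intro t
    have h1 : ContDiffAt ℝ 1 (fderiv ℝ f) (c t) := (hfA t).fderiv_right (by exact WithTop.coe_le_coe.2 le_top)
    exact ((h1.differentiableAt one_ne_zero).hasFDerivAt).comp_hasDerivAt t (hcD t)
  have hφ'' : ∀ t : ℝ, HasDerivAt (deriv φ) (fderiv ℝ (fderiv ℝ f) (c t) u u) t := by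
    intro t
    rw [hderiv]
    have := (hg t).clm_apply (hasDerivAt_const t u)
    simpa using this
  have hpos : ∀ t : ℝ, 0 < deriv^[2] φ t := by
    intro t
    have h2 : deriv^[2] φ t = fderiv ℝ (fderiv ℝ f) (c t) u u := by
      simp only [Function.iterate_succ, Function.iterate_zero, Function.comp_apply, id]
      exact (hφ'' t).deriv
    rw [h2]
    have := hF.posdef (c t) (h0 t) u hu
    rw [iteratedFDeriv_two_apply] at this
    simp only [Matrix.cons_val_zero, Matrix.cons_val_one, Matrix.head_cons] at this
    linarith
  have hcont : Continuous φ := by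
    have : Continuous c := by continuity
    exact (hF.continuous.comp this).pow 2
  have hco : StrictConvexOn ℝ (Set.univ : Set ℝ) φ :=
    strictConvexOn_of_deriv2_pos' convex_univ hcont.continuousOn fun t _ => hpos t
  have := hco.2 (Set.mem_univ (0 : ℝ)) (Set.mem_univ (1 : ℝ)) (by norm_num)
    (by norm_num : (0:ℝ) < 1/2) (by norm_num : (0:ℝ) < 1/2) (by norm_num)
  have h0' : φ 0 = F v2 ^ 2 := by simp [hφ_def, hc_def, hf_def]
  have h1' : φ 1 = F v1 ^ 2 := by simp [hφ_def, hc_def, hf_def, hu_def]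
  have hm : φ ((1/2 : ℝ) • (0:ℝ) + (1/2 : ℝ) • (1:ℝ)) = F (v2 + (1/2 : ℝ) • u) ^ 2 := by
    norm_num [hφ_def, hc_def, hf_def]
  rw [hm, h0', h1'] at this
  simp only [smul_eq_mul] at this
  linarith

/-- Given a Minkowski norm F1 on V1, a surjective linear map pi : V1 -> V2 and a
nonzero vector w in V2, the infimum inf { F1 v | pi v = w } is attained at a unique
vector v with pi v = w (the horizontal lift of w). -/
theorem exists_unique_horizontal_lift
    {V1 V2 : Type*} [NormedAddCommGroup V1] [NormedSpace ℝ V1] [FiniteDimensional ℝ V1]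
    [NormedAddCommGroup V2] [NormedSpace ℝ V2] [FiniteDimensional ℝ V2]
    (F1 : V1 → ℝ) (hF1 : IsMinkowskiNorm F1)
    (π : V1 →ₗ[ℝ] V2) (hπ : Function.Surjective π)
    (w : V2) (hw : w ≠ 0) :
    ∃! v : V1, π v = w ∧ F1 v = sInf (F1 '' {x | π x = w}) := by
  have hFnn : ∀ x : V1, 0 ≤ F1 x := by
    intro x
    rcases eq_or_ne x 0 with rfl | hx
    · rw [hF1.map_zero]
    · exact (hF1.pos x hx).le
  set S : Set V1 := {x | π x = w} with hS_def
  obtain ⟨v0, hv0⟩ := hπ w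
  have hv0S : v0 ∈ S := hv0
  have hScl : IsClosed S := by
    have : Continuous π := π.continuous_of_finiteDimensional
    exact isClosed_eq this continuous_const
  -- coercivity
  obtain ⟨ε, hε, hεle⟩ : ∃ ε > (0:ℝ), ∀ b ∈ Metric.sphere (0:V1) 1, ε ≤ F1 b := by
    have hcs : IsCompact (Metric.sphere (0:V1) 1) := isCompact_sphere 0 1
    exact hcs.exists_forall_le' hF1.continuous.continuousOn
      (fun b hb => hF1.pos b (by
        intro h; rw [h] at hb; simp at hb))
  have hcoer : ∀ x : V1, ε * ‖x‖ ≤ F1 x := by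
    intro x
    rcases eq_or_ne x 0 with rfl | hx
    · simp [hF1.map_zero]
    · have hnx : (0:ℝ) < ‖x‖ := norm_pos_iff.2 hx
      have hmem : ‖x‖⁻¹ • x ∈ Metric.sphere (0:V1) 1 := by
        simp [norm_smul, abs_of_pos (inv_pos.2 hnx), inv_mul_cancel₀ hnx.ne']
      have h1 := hεle _ hmem
      have h2 := hF1.pos_homog ‖x‖ hnx (‖x‖⁻¹ • x)
      rw [smul_smul, mul_inv_cancel₀ hnx.ne', one_smul] at h2
      rw [h2] at *
      calc ε * ‖x‖ ≤ F1 (‖x‖⁻¹ • x) * ‖x‖ := by nlinarith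
        _ = ‖x‖ * F1 (‖x‖⁻¹ • x) := mul_comm _ _
  -- existence of minimizer
  obtain ⟨v, hvS, hvmin⟩ : ∃ v ∈ S, ∀ x ∈ S, F1 v ≤ F1 x := by
    have hev : ∀ᶠ x in Filter.cocompact V1 ⊓ Filter.principal S, F1 v0 ≤ F1 x := by
      apply Filter.Eventually.filter_mono inf_le_left
      rw [Filter.hasBasis_cocompact.eventually_iff]
      refine ⟨Metric.closedBall 0 (F1 v0 / ε), isCompact_closedBall _ _, fun x hx => ?_⟩
      simp only [Set.mem_compl_iff, Metric.mem_closedBall, dist_zero_right, not_le] at hx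
      have := hcoer x
      calc F1 v0 ≤ ε * (F1 v0 / ε) := by field_simp; exact le_rfl
        _ ≤ ε * ‖x‖ := by nlinarith
        _ ≤ F1 x := this
    obtain ⟨v, hvS, hv⟩ := hF1.continuous.continuousOn.exists_isMinOn' hScl hv0S hev
    exact ⟨v, hvS, fun x hx => hv hx⟩
  have hbdd : BddBelow (F1 '' S) := ⟨0, fun y ⟨x, _, hx⟩ => hx ▸ hFnn x⟩
  have hinf : sInf (F1 '' S) = F1 v := by
    apply le_antisymm
    · exact csInf_le hbdd ⟨v, hvS, rfl⟩
    · exact le_csInf ⟨F1 v0, v0, hv0S, rfl⟩ (fun y ⟨x, hx, hxy⟩ => hxy ▸ hvmin x hx)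
  refine ⟨v, ⟨hvS, hinf.symm⟩, ?_⟩
  rintro v' ⟨hv'S, hv'eq⟩
  by_contra hne
  -- strict convexity contradiction
  set m : ℝ := sInf (F1 '' S) with hm_def
  have hmv : F1 v = m := hinf.symm ▸ rfl
  have hv'ne0 : v' ≠ 0 := by
    intro h; rw [h] at hv'S; exact hw (by simpa [hS_def] using hv'S.symm)
  have hmpos : 0 < m := hv'eq ▸ hF1.pos v' hv'ne0
  have hπv : π v = w := hvS
  have hline : ∀ t : ℝ, π (v + t • (v' - v)) = w := by
    intro t
    simp [map_add, map_smul, map_sub, hπv, hv'S]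
  have h0 : ∀ t : ℝ, v + t • (v' - v) ≠ 0 := by
    intro t h
    apply hw
    rw [← hline t, h, map_zero]
  have hkey := minkowski_sq_strict_midpoint F1 hF1 hne h0
  have hzS : (v + (1/2 : ℝ) • (v' - v)) ∈ S := hline (1/2)
  have hzge : m ≤ F1 (v + (1/2 : ℝ) • (v' - v)) := csInf_le hbdd ⟨_, hzS, rfl⟩
  rw [hmv, hv'eq] at hkey
  nlinarith [hkey, hzge, hmpos]
end

section
/- Let V1 and V2 be finite-dimensional real vector spaces, let F1 be a Minkowski norm on V1, let π : V1 → V2 be a surjective linear map, let w ∈ V2 be nonzero, and let v ∈ V1 satisfy π(v) = w. Then v attains the infimum inf { F1(x) | π(x) = w } (i.e., v is the horizontal lift of w) if and only if g_v(v, k) = 0 for every k ∈ ker π, where g_v is the positive-definite bilinear form g_v(u,u') := (1/2)·D²(F1²)(v)(u,u'). -/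
namespace MinkAux

variable {V : Type*} [NormedAddCommGroup V] [NormedSpace ℝ V]
variable {F : V → ℝ}

lemma contDiffAt_sq (hF : IsMinkowskiNorm F) {y : V} (hy : y ≠ 0) :
    ContDiffAt ℝ (⊤ : ℕ∞) (fun x => F x ^ 2) y := by
  have h : ContDiffOn ℝ (⊤ : ℕ∞) (fun x => F x ^ 2) {y | y ≠ 0} := hF.smooth.pow 2
  exact h.contDiffAt (isOpen_ne.mem_nhds hy)

lemma diffAt_sq (hF : IsMinkowskiNorm F) {y : V} (hy : y ≠ 0) :
    DifferentiableAt ℝ (fun x => F x ^ 2) y :=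
  (contDiffAt_sq hF hy).differentiableAt (by simp)

lemma diffAt_fderiv_sq (hF : IsMinkowskiNorm F) {y : V} (hy : y ≠ 0) :
    DifferentiableAt ℝ (fderiv ℝ (fun x => F x ^ 2)) y :=
  ((contDiffAt_sq hF hy).fderiv_right (m := 1) (WithTop.coe_le_coe.mpr le_top)).differentiableAt one_ne_zero

lemma sq_homog (hF : IsMinkowskiNorm F) {c : ℝ} (hc : 0 < c) (x : V) :
    F (c • x) ^ 2 = c ^ 2 * F x ^ 2 := by
  rw [hF.pos_homog c hc x]; ring

lemma fderiv_sq_smul (hF : IsMinkowskiNorm F) {y : V} (hy : y ≠ 0) {c : ℝ} (hc : 0 < c)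
    (k : V) :
    fderiv ℝ (fun x => F x ^ 2) (c • y) k = c * fderiv ℝ (fun x => F x ^ 2) y k := by
  set G : V → ℝ := fun x => F x ^ 2 with hG
  have hcy : c • y ≠ 0 := smul_ne_zero hc.ne' hy
  have h1 : HasFDerivAt (fun x => G (c • x))
      ((fderiv ℝ G (c • y)).comp (c • ContinuousLinearMap.id ℝ V)) y := by
    have hin : HasFDerivAt (fun x : V => c • x) (c • ContinuousLinearMap.id ℝ V) y :=
      (c • ContinuousLinearMap.id ℝ V).hasFDerivAt
    exact ((diffAt_sq hF hcy).hasFDerivAt).comp y hin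
  have h2 : HasFDerivAt (fun x => G (c • x)) ((c ^ 2) • fderiv ℝ G y) y := by
    have : (fun x => G (c • x)) = fun x => c ^ 2 * G x := funext fun x => sq_homog hF hc x
    rw [this]
    exact ((diffAt_sq hF hy).hasFDerivAt).const_mul (c ^ 2)
  have := h1.unique h2
  have happ := congrArg (fun (L : V →L[ℝ] ℝ) => L k) this
  simp only [ContinuousLinearMap.comp_apply, ContinuousLinearMap.smul_apply,
    ContinuousLinearMap.id_apply, map_smul, smul_eq_mul] at happ
  rw [pow_two, mul_assoc] at happ
  exact mul_left_cancel₀ hc.ne' happ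

lemma euler (hF : IsMinkowskiNorm F) {y : V} (hy : y ≠ 0) (k : V) :
    fderiv ℝ (fderiv ℝ (fun x => F x ^ 2)) y y k = fderiv ℝ (fun x => F x ^ 2) y k := by
  set G : V → ℝ := fun x => F x ^ 2 with hG
  have hA : HasFDerivAt (fun x => fderiv ℝ G x k)
      ((ContinuousLinearMap.apply ℝ ℝ k).comp (fderiv ℝ (fderiv ℝ G) y)) y :=
    (ContinuousLinearMap.apply ℝ ℝ k).hasFDerivAt.comp y (diffAt_fderiv_sq hF hy).hasFDerivAt
  have hline : HasDerivAt (fun c : ℝ => c • y) y 1 := by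
    simpa using (hasDerivAt_id (1:ℝ)).smul_const y
  have hθ : HasDerivAt (fun c : ℝ => fderiv ℝ G (c • y) k)
      (fderiv ℝ (fderiv ℝ G) y y k) 1 := by
    have hA' : HasFDerivAt (fun x => fderiv ℝ G x k)
        ((ContinuousLinearMap.apply ℝ ℝ k).comp (fderiv ℝ (fderiv ℝ G) y)) ((1:ℝ) • y) := by
      rw [one_smul]; exact hA
    have := hA'.comp_hasDerivAt 1 hline
    exact this
  have heq : (fun c : ℝ => fderiv ℝ G (c • y) k)
      =ᶠ[nhds 1] (fun c => c * fderiv ℝ G y k) := by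
    filter_upwards [isOpen_Ioi.mem_nhds (by norm_num : (0:ℝ) < 1)] with c hc
    exact fderiv_sq_smul hF hy hc k
  have hθ' : HasDerivAt (fun c : ℝ => c * fderiv ℝ G y k)
      (fderiv ℝ (fderiv ℝ G) y y k) 1 := hθ.congr_of_eventuallyEq heq.symm
  have h2 : HasDerivAt (fun c : ℝ => c * fderiv ℝ G y k) (fderiv ℝ G y k) 1 :=
    hasDerivAt_mul_const _
  exact hθ'.unique h2

end MinkAux

/-- Let F1 be a Minkowski norm on V1, pi : V1 -> V2 a surjective linear map, w nonzero
and pi v = w.  Then v attains inf { F1 x | pi x = w } (i.e. v is the horizontal lift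
of w) iff g_v(v, k) = 0 for every k in ker pi, where g_v(u,u') = (1/2) D^2(F1^2)(v)(u,u'). -/
theorem horizontal_lift_iff_hessian_orthogonal
    {V1 V2 : Type*} [NormedAddCommGroup V1] [NormedSpace ℝ V1] [FiniteDimensional ℝ V1]
    [NormedAddCommGroup V2] [NormedSpace ℝ V2] [FiniteDimensional ℝ V2]
    (F1 : V1 → ℝ) (hF1 : IsMinkowskiNorm F1)
    (π : V1 →ₗ[ℝ] V2) (hπ : Function.Surjective π)
    (w : V2) (hw : w ≠ 0) (v : V1) (hv : π v = w) :
    F1 v = sInf (F1 '' {x | π x = w}) ↔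
      ∀ k ∈ LinearMap.ker π,
        (1 / 2 : ℝ) * iteratedFDeriv ℝ 2 (fun x => F1 x ^ 2) v ![v, k] = 0 := by
  classical
  set G : V1 → ℝ := fun x => F1 x ^ 2 with hGdef
  have hv0 : v ≠ 0 := by rintro rfl; rw [map_zero] at hv; exact hw hv.symm
  have hAne : ∀ x : V1, π x = w → x ≠ 0 := by
    rintro x hx rfl; rw [map_zero] at hx; exact hw hx.symm
  have hbdd : BddBelow (F1 '' {x | π x = w}) :=
    ⟨0, by rintro r ⟨x, hx, rfl⟩; exact (hF1.pos x (hAne x hx)).le⟩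
  have hmem : F1 v ∈ F1 '' {x | π x = w} := ⟨v, hv, rfl⟩
  have hline_mem : ∀ (k : V1), k ∈ LinearMap.ker π → ∀ t : ℝ, π (v + t • k) = w := by
    intro k hk t
    rw [map_add, map_smul, LinearMap.mem_ker.mp hk, smul_zero, add_zero, hv]
  have hline_ne : ∀ (k : V1), k ∈ LinearMap.ker π → ∀ t : ℝ, v + t • k ≠ 0 :=
    fun k hk t => hAne _ (hline_mem k hk t)
  have hφd : ∀ (k : V1), k ∈ LinearMap.ker π → ∀ (t : ℝ),
      HasDerivAt (fun s : ℝ => G (v + s • k)) (fderiv ℝ G (v + t • k) k) t := by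
    intro k hk t
    have hin : HasDerivAt (fun s : ℝ => v + s • k) k t := by
      simpa using ((hasDerivAt_id t).smul_const k).const_add v
    exact ((MinkAux.diffAt_sq hF1 (hline_ne k hk t)).hasFDerivAt).comp_hasDerivAt t hin
  have hiter : ∀ (y u u' : V1),
      iteratedFDeriv ℝ 2 G y ![u, u'] = fderiv ℝ (fderiv ℝ G) y u u' := by
    intro y u u'
    rw [iteratedFDeriv_two_apply]
    simp
  constructor
  · intro hmin k hk
    have hle : ∀ t : ℝ, (fun s : ℝ => G (v + s • k)) 0 ≤ (fun s : ℝ => G (v + s • k)) t := by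
      intro t
      have h1 : F1 v ≤ F1 (v + t • k) := by
        rw [hmin]
        exact csInf_le hbdd ⟨v + t • k, hline_mem k hk t, rfl⟩
      simp only [zero_smul, add_zero]
      exact pow_le_pow_left₀ (hF1.pos v hv0).le h1 2
    have hloc : IsLocalMin (fun s : ℝ => G (v + s • k)) 0 :=
      Filter.Eventually.of_forall hle
    have hz := hloc.hasDerivAt_eq_zero (hφd k hk 0)
    have hz' : fderiv ℝ G v k = 0 := by simpa using hz
    rw [hiter v v k, MinkAux.euler hF1 hv0 k, hz', mul_zero]
  · intro horth
    have hkey : ∀ x : V1, π x = w → F1 v ≤ F1 x := by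
      intro x hx
      rcases eq_or_ne x v with rfl | hxv
      · exact le_rfl
      set k : V1 := x - v with hkdef
      have hk : k ∈ LinearMap.ker π := by
        rw [LinearMap.mem_ker, hkdef, map_sub, hx, hv, sub_self]
      have hk0 : k ≠ 0 := sub_ne_zero.mpr hxv
      have hz : fderiv ℝ G v k = 0 := by
        have h := horth k hk
        rw [hiter v v k, MinkAux.euler hF1 hv0 k] at h
        linarith
      have hφ'd : ∀ t : ℝ, HasDerivAt (fun s : ℝ => fderiv ℝ G (v + s • k) k)
          (fderiv ℝ (fderiv ℝ G) (v + t • k) k k) t := by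
        intro t
        have hin : HasDerivAt (fun s : ℝ => v + s • k) k t := by
          simpa using ((hasDerivAt_id t).smul_const k).const_add v
        have hA : HasFDerivAt (fun y => fderiv ℝ G y k)
            ((ContinuousLinearMap.apply ℝ ℝ k).comp (fderiv ℝ (fderiv ℝ G) (v + t • k)))
            (v + t • k) :=
          (ContinuousLinearMap.apply ℝ ℝ k).hasFDerivAt.comp _
            (MinkAux.diffAt_fderiv_sq hF1 (hline_ne k hk t)).hasFDerivAt
        exact hA.comp_hasDerivAt t hin
      have hpos : ∀ t : ℝ, 0 < fderiv ℝ (fderiv ℝ G) (v + t • k) k k := by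
        intro t
        have h := hF1.posdef (v + t • k) (hline_ne k hk t) k hk0
        rw [hiter] at h
        linarith
      have hmono : StrictMono (fun s : ℝ => fderiv ℝ G (v + s • k) k) := by
        apply strictMono_of_deriv_pos
        intro t
        rw [(hφ'd t).deriv]
        exact hpos t
      have hφ'0 : (fun s : ℝ => fderiv ℝ G (v + s • k) k) 0 = 0 := by simpa using hz
      have hφmono : StrictMonoOn (fun s : ℝ => G (v + s • k)) (Set.Icc 0 1) := by
        apply strictMonoOn_of_deriv_pos (convex_Icc 0 1)
        · exact fun t _ => ((hφd k hk t).continuousAt).continuousWithinAt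
        · intro t ht
          rw [interior_Icc] at ht
          rw [(hφd k hk t).deriv]
          have h2 := hmono ht.1
          rw [hφ'0] at h2
          exact h2
      have h01 : (fun s : ℝ => G (v + s • k)) 0 < (fun s : ℝ => G (v + s • k)) 1 :=
        hφmono (Set.left_mem_Icc.mpr zero_le_one) (Set.right_mem_Icc.mpr zero_le_one) zero_lt_one
      have hGle : G v ≤ G x := by
        have := h01.le
        simpa [hkdef] using this
      have hFx : 0 < F1 x := hF1.pos x (hAne x hx)
      have hFv : 0 < F1 v := hF1.pos v hv0
      have hsq : F1 v ^ 2 ≤ F1 x ^ 2 := hGle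
      nlinarith [hsq]
    refine le_antisymm ?_ (csInf_le hbdd hmem)
    exact le_csInf ⟨F1 v, hmem⟩ (by rintro b ⟨x, hx, rfl⟩; exact hkey x hx)
end

section
/- Let a, b ∈ ℂ and consider the 3×3 complex matrices u = diag(i, i, -2i), v = [[0,0,a],[0,0,b],[-ā,-b̄,0]] (where ā, b̄ denote complex conjugates), and w := (1/3)·⁅u,v⁆. Then (1) w = [[0,0,ia],[0,0,ib],[iā,ib̄,0]], and (2) if ⁅v,w⁆ lies in the real linear span of {u, v, w} (i.e., ⁅v,w⁆ ∈ Span_ℝ{u,v,w}), then a = 0 and b = 0. -/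
/-!
Both `u = diag(i, i, -2i)` and the matrices `[[0, 0, x], [0, 0, y], [z, t, 0]]` have a scalar
upper-left `2 × 2` block, hence so does every element of `Span_ℝ {u, v, w}`. But the upper-left
block of `⁅v, w⁆` is `2i · [[|a|², a b̄], [b ā, |b|²]]`; for it to be scalar we need `a b̄ = 0`
and `|a| = |b|`, which forces `a = b = 0`.
-/

open Matrix Complex ComplexConjugate

namespace Su3

def blockScalar (c d : ℂ) : Matrix (Fin 3) (Fin 3) ℂ :=
  !![c, 0, 0; 0, c, 0; 0, 0, d]

def offBlock (x y z t : ℂ) : Matrix (Fin 3) (Fin 3) ℂ :=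
  !![0, 0, x; 0, 0, y; z, t, 0]

def scalarTopLeftBlock : Submodule ℂ (Matrix (Fin 3) (Fin 3) ℂ) where
  carrier := {M | M 0 1 = 0 ∧ M 1 0 = 0 ∧ M 0 0 = M 1 1}
  add_mem' := by
    rintro M N ⟨hM01, hM10, hM⟩ ⟨hN01, hN10, hN⟩
    simp_all
  zero_mem' := by simp
  smul_mem' := by
    rintro c M ⟨h01, h10, h⟩
    simp_all

theorem blockScalar_mem_scalarTopLeftBlock (c d : ℂ) :
    blockScalar c d ∈ scalarTopLeftBlock := by
  simp [scalarTopLeftBlock, blockScalar]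

theorem offBlock_mem_scalarTopLeftBlock (x y z t : ℂ) :
    offBlock x y z t ∈ scalarTopLeftBlock := by
  simp [scalarTopLeftBlock, offBlock]

theorem smul_offBlock (c x y z t : ℂ) :
    c • offBlock x y z t = offBlock (c * x) (c * y) (c * z) (c * t) := by
  ext i j
  fin_cases i <;> fin_cases j <;> simp [offBlock]

theorem lie_blockScalar_offBlock (c d x y z t : ℂ) :
    ⁅blockScalar c d, offBlock x y z t⁆ =
      offBlock ((c - d) * x) ((c - d) * y) ((d - c) * z) ((d - c) * t) := by
  ext i j
  fin_cases i <;> fin_cases j <;> simp [blockScalar, offBlock, Ring.lie_def] <;> ring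

theorem lie_offBlock_offBlock (x y z t x' y' z' t' : ℂ) :
    ⁅offBlock x y z t, offBlock x' y' z' t'⁆ =
      !![x * z' - x' * z, x * t' - x' * t, 0;
        y * z' - y' * z, y * t' - y' * t, 0;
        0, 0, z * x' + t * y' - z' * x - t' * y] := by
  ext i j
  fin_cases i <;> fin_cases j <;> simp [offBlock, Ring.lie_def]; ring

theorem eq_zero_and_eq_zero_of_mul_conj_eq_zero {a b : ℂ} (hab : a * conj b = 0)
    (h : a * conj a = b * conj b) : a = 0 ∧ b = 0 := by
  rw [mul_conj, mul_conj] at h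
  rcases mul_eq_zero.mp hab with rfl | hb
  · simp_all [eq_comm (a := (0 : ℂ))]
  · rw [map_eq_zero] at hb
    simp_all

end Su3

open Su3

/-- For `a b : ℂ`, let `u = diag(i,i,-2i)`,
`v = [[0,0,a],[0,0,b],[-conj a, -conj b, 0]]` and `w = (1/3)⁅u,v⁆` in `su(3)`.  Then
(1) `w = [[0,0,ia],[0,0,ib],[i conj a, i conj b, 0]]`, and (2) if `⁅v,w⁆` lies in the
real span of `{u, v, w}` then `a = 0` and `b = 0`. -/
theorem su3_no_A1_subalgebra_aux
    (a b : ℂ) (u v w : Matrix (Fin 3) (Fin 3) ℂ)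
    (hu : u = !![I, 0, 0; 0, I, 0; 0, 0, -2 * I])
    (hv : v = !![0, 0, a; 0, 0, b; -(starRingEnd ℂ) a, -(starRingEnd ℂ) b, 0])
    (hw : w = (1 / 3 : ℂ) • ⁅u, v⁆) :
    w = !![0, 0, I * a; 0, 0, I * b; I * (starRingEnd ℂ) a, I * (starRingEnd ℂ) b, 0] ∧
      (⁅v, w⁆ ∈ Submodule.span ℝ ({u, v, w} : Set (Matrix (Fin 3) (Fin 3) ℂ)) →
        a = 0 ∧ b = 0) := by
  replace hu : u = blockScalar I (-2 * I) := hu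
  replace hv : v = offBlock a b (-conj a) (-conj b) := hv
  have hw' : w = offBlock (I * a) (I * b) (I * conj a) (I * conj b) := by
    rw [hw, hu, hv, lie_blockScalar_offBlock, smul_offBlock]
    congr 1 <;> ring
  refine ⟨hw', fun hspan => ?_⟩
  have hsub : Submodule.span ℝ {u, v, w} ≤ scalarTopLeftBlock.restrictScalars ℝ := by
    rw [Submodule.span_le, Set.insert_subset_iff, Set.insert_subset_iff, Set.singleton_subset_iff,
      hu, hv, hw']
    exact ⟨blockScalar_mem_scalarTopLeftBlock .., offBlock_mem_scalarTopLeftBlock ..,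
      offBlock_mem_scalarTopLeftBlock ..⟩
  obtain ⟨h01, -, hdiag⟩ := hsub hspan
  rw [hv, hw', lie_offBlock_offBlock] at h01 hdiag
  simp only [of_apply, cons_val', cons_val_zero, cons_val_one, empty_val', cons_val_fin_one] at h01 hdiag
  have h2I : (2 * I : ℂ) ≠ 0 := by simp
  refine eq_zero_and_eq_zero_of_mul_conj_eq_zero ?_ ?_
  · exact (mul_eq_zero.mp (by linear_combination h01 : 2 * I * (a * conj b) = 0)).resolve_left h2I
  · exact mul_left_cancel₀ h2I (by linear_combination hdiag)
end

section
/- Let x = (a,b,c) and y = (a',b',c') be vectors in ℝ³, and consider the 5×5 real matrices: u, whose only nonzero entries are u₄₅ = -1 and u₅₄ = 1; v, whose only nonzero entries are given in block form by v = [[0, -A],[Aᵀ, 0]] where A is the 3×2 matrix with columns x and y (that is, vᵢ₄ = -xᵢ, vᵢ₅ = -yᵢ, v₄ᵢ = xᵢ, v₅ᵢ = yᵢ for i = 1,2,3); and w := ⁅u,v⁆ = u·v − v·u. If ⁅v,w⁆ lies in the real linear span of {u, v, w}, then x and y are linearly dependent over ℝ. -/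
/-!
Write `u` for the rotation generator of the last two coordinates and `v = v(x, y)` for the
off-diagonal block built from the columns `x, y`. Bracketing with `u` rotates the columns:
`⁅u, v(x, y)⁆ = v(-y, x)`. Hence `u`, `v`, `w` all vanish on the upper-left `3 × 3` block,
and so does everything in their span, while the upper-left block of `⁅v, w⁆` is
`2 (x yᵀ - y xᵀ)`, whose off-diagonal entries are, up to sign, twice the components of
`x ⨯₃ y`. So `x ⨯₃ y = 0`.
-/

open Matrix

lemma Matrix.apply_eq_zero_of_mem_span {R m n : Type*} [Semiring R] {s : Set (Matrix m n R)}
    {M : Matrix m n R} (hM : M ∈ Submodule.span R s) {i : m} {j : n}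
    (hs : ∀ N ∈ s, N i j = 0) : M i j = 0 :=
  (Submodule.span_le (p := LinearMap.ker (entryLinearMap R R i j))).mpr hs hM

lemma crossProduct_eq_zero_of_forall_mul_eq {R : Type*} [CommRing R] {x y : Fin 3 → R}
    (h : ∀ i j, x i * y j = x j * y i) : x ⨯₃ y = 0 := by
  rw [cross_apply, sub_eq_zero.mpr (h 1 2), sub_eq_zero.mpr (h 2 0), sub_eq_zero.mpr (h 0 1)]
  ext k
  fin_cases k <;> rfl

namespace So5

variable (R : Type*) [CommRing R]

def rot45 : Matrix (Fin 5) (Fin 5) R :=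
  !![0, 0, 0, 0, 0;
     0, 0, 0, 0, 0;
     0, 0, 0, 0, 0;
     0, 0, 0, 0, -1;
     0, 0, 0, 1, 0]

variable {R}

def offDiagBlock (x y : Fin 3 → R) : Matrix (Fin 5) (Fin 5) R :=
  !![0, 0, 0, -x 0, -y 0;
     0, 0, 0, -x 1, -y 1;
     0, 0, 0, -x 2, -y 2;
     x 0, x 1, x 2, 0, 0;
     y 0, y 1, y 2, 0, 0]

variable (x y x' y' : Fin 3 → R) (i j : Fin 3)

lemma rot45_apply_castAdd : rot45 R (Fin.castAdd 2 i) (Fin.castAdd 2 j) = 0 := by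
  fin_cases i <;> fin_cases j <;> rfl

lemma offDiagBlock_apply_castAdd : offDiagBlock x y (Fin.castAdd 2 i) (Fin.castAdd 2 j) = 0 := by
  fin_cases i <;> fin_cases j <;> rfl

lemma lie_rot45_offDiagBlock : ⁅rot45 R, offDiagBlock x y⁆ = offDiagBlock (-y) x := by
  ext i j
  simp only [Ring.lie_def, Matrix.sub_apply, mul_apply, Fin.sum_univ_five]
  fin_cases i <;> fin_cases j <;> simp [rot45, offDiagBlock]

lemma lie_offDiagBlock_apply_castAdd :
    ⁅offDiagBlock x y, offDiagBlock x' y'⁆ (Fin.castAdd 2 i) (Fin.castAdd 2 j) =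
      x' i * x j + y' i * y j - (x i * x' j + y i * y' j) := by
  simp only [Ring.lie_def, Matrix.sub_apply, mul_apply, Fin.sum_univ_five]
  fin_cases i <;> fin_cases j <;> simp [offDiagBlock] <;> ring

lemma lie_offDiagBlock_lie_rot45_apply_castAdd :
    ⁅offDiagBlock x y, ⁅rot45 R, offDiagBlock x y⁆⁆ (Fin.castAdd 2 i) (Fin.castAdd 2 j) =
      2 * (x i * y j - x j * y i) := by
  rw [lie_rot45_offDiagBlock, lie_offDiagBlock_apply_castAdd]
  simp only [Pi.neg_apply]
  ring

end So5

/-- Let `x = (a,b,c)` and `y = (a',b',c')` in `ℝ³`, and consider the `5×5` real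
matrices `u` (whose only nonzero entries are `u₄₅ = -1`, `u₅₄ = 1`),
`v = [[0, -A],[Aᵀ, 0]]` in block form, where `A` is the `3×2` matrix with columns `x`
and `y`, and `w = ⁅u,v⁆`.  If `⁅v,w⁆` lies in the real span of `{u,v,w}` then `x` and
`y` are linearly dependent over `ℝ`. -/
theorem so5_columns_linearly_dependent
    (x y : Fin 3 → ℝ) (u v w : Matrix (Fin 5) (Fin 5) ℝ)
    (hu : u = !![0, 0, 0, 0, 0;
                 0, 0, 0, 0, 0;
                 0, 0, 0, 0, 0;
                 0, 0, 0, 0, -1;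
                 0, 0, 0, 1, 0])
    (hv : v = !![0, 0, 0, -x 0, -y 0;
                 0, 0, 0, -x 1, -y 1;
                 0, 0, 0, -x 2, -y 2;
                 x 0, x 1, x 2, 0, 0;
                 y 0, y 1, y 2, 0, 0])
    (hw : w = ⁅u, v⁆)
    (h : ⁅v, w⁆ ∈ Submodule.span ℝ ({u, v, w} : Set (Matrix (Fin 5) (Fin 5) ℝ))) :
    ¬ LinearIndependent ℝ ![x, y] := by
  change u = So5.rot45 ℝ at hu
  change v = So5.offDiagBlock x y at hv
  have hblock_zero : ∀ N ∈ ({u, v, w} : Set (Matrix (Fin 5) (Fin 5) ℝ)), ∀ i j : Fin 3,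
      N (Fin.castAdd 2 i) (Fin.castAdd 2 j) = 0 := by
    rintro N (rfl | rfl | rfl) i j
    · exact hu ▸ So5.rot45_apply_castAdd i j
    · exact hv ▸ So5.offDiagBlock_apply_castAdd x y i j
    · rw [hw, hu, hv, So5.lie_rot45_offDiagBlock]
      exact So5.offDiagBlock_apply_castAdd _ _ i j
  have hminor : ∀ i j, x i * y j = x j * y i := fun i j => by
    have hentry := Matrix.apply_eq_zero_of_mem_span h fun N hN => hblock_zero N hN i j
    rw [hw, hu, hv, So5.lie_offDiagBlock_lie_rot45_apply_castAdd] at hentry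
    linarith
  rw [← crossProduct_ne_zero_iff_linearIndependent, not_not]
  exact crossProduct_eq_zero_of_forall_mul_eq hminor
end

section
/- For t ∈ ℝ, let v(t) be the 4×4 complex matrix v(t) = [[i,0,0,t],[0,-i,-t,0],[0,t,-3i,0],[-t,0,0,3i]]. Then for every t with 0 < |t| < 1, every real number c, and every invertible 4×4 complex matrix P, one has P·v(t)·P⁻¹ ≠ c·v(0). In other words, for such t the matrix v(t) is not similar to any real scalar multiple of v(0) = diag(i,-i,-3i,3i). -/
/-!
Conjugation preserves the trace of every power. For `v t` one computes
`tr (v t)² = -20 - 4t²` and `tr (v t)⁴ = 164 + 104t² + 4t⁴`, while `c • v 0` gives `-20c²` and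
`164c⁴`. Eliminating `c² = 1 + t²/5` leaves `t² (t² - 15) = 0`, impossible for `0 < |t| < 1`.
-/

open Matrix Complex

theorem Matrix.trace_pow_eq_of_conj_eq {n R : Type*} [Fintype n] [DecidableEq n] [CommRing R]
    {P A B : Matrix n n R} (hP : IsUnit P) (h : P * A * P⁻¹ = B) (k : ℕ) :
    trace (A ^ k) = trace (B ^ k) := by
  rw [← h, ← hP.unit_spec, ← coe_units_inv, Units.conj_pow, trace_units_conj]

def sp2Family (t : ℝ) : Matrix (Fin 4) (Fin 4) ℂ :=
  !![I, 0, 0, (t : ℂ);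
     0, -I, -(t : ℂ), 0;
     0, (t : ℂ), -3 * I, 0;
     -(t : ℂ), 0, 0, 3 * I]

theorem sp2Family_sq (t : ℝ) : sp2Family t ^ 2 =
    !![-1 - (t : ℂ) ^ 2, 0, 0, 4 * I * t;
       0, -1 - (t : ℂ) ^ 2, 4 * I * t, 0;
       0, -4 * I * t, -9 - (t : ℂ) ^ 2, 0;
       -4 * I * t, 0, 0, -9 - (t : ℂ) ^ 2] := by
  ext i j
  fin_cases i <;> fin_cases j <;>
    simp [sq, sp2Family, mul_apply, Fin.sum_univ_four] <;> ring_nf <;> simp [I_sq] <;> ring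

theorem trace_sp2Family_sq (t : ℝ) :
    trace (sp2Family t ^ 2) = ((-20 - 4 * t ^ 2 : ℝ) : ℂ) := by
  rw [sp2Family_sq]
  simp [trace, Fin.sum_univ_four]
  ring

theorem trace_sp2Family_pow_four (t : ℝ) :
    trace (sp2Family t ^ 4) = ((164 + 104 * t ^ 2 + 4 * t ^ 4 : ℝ) : ℂ) := by
  rw [show sp2Family t ^ 4 = (sp2Family t ^ 2) ^ 2 by rw [← pow_mul], sp2Family_sq]
  simp [sq, trace, Fin.sum_univ_four]
  ring_nf
  simp [I_sq]
  ring

theorem sq_mul_sq_sub_fifteen_eq_zero {t c : ℝ} (h2 : -20 - 4 * t ^ 2 = c ^ 2 * -20)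
    (h4 : 164 + 104 * t ^ 2 + 4 * t ^ 4 = c ^ 4 * 164) : t ^ 2 * (t ^ 2 - 15) = 0 := by
  have hc : c ^ 2 = 1 + t ^ 2 / 5 := by linarith
  linear_combination (-25 / 64) * h4 + (-25 / 64) * 164 * (c ^ 2 + 1 + t ^ 2 / 5) * hc

/-- For `t : ℝ`, let `v t = [[i,0,0,t],[0,-i,-t,0],[0,t,-3i,0],[-t,0,0,3i]]`.
For every `t` with `0 < |t| < 1`, every real `c` and every invertible complex `4×4`
matrix `P`, one has `P * v t * P⁻¹ ≠ c • v 0`: the matrix `v t` is not similar to any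
real scalar multiple of `v 0 = diag(i,-i,-3i,3i)`. -/
theorem sp2_family_not_conjugate
    (v : ℝ → Matrix (Fin 4) (Fin 4) ℂ)
    (hv : ∀ t : ℝ, v t =
      !![I, 0, 0, (t : ℂ);
         0, -I, -(t : ℂ), 0;
         0, (t : ℂ), -3 * I, 0;
         -(t : ℂ), 0, 0, 3 * I]) :
    ∀ t : ℝ, 0 < |t| → |t| < 1 → ∀ c : ℝ, ∀ P : Matrix (Fin 4) (Fin 4) ℂ,
      IsUnit P → P * v t * P⁻¹ ≠ c • v 0 := by
  intro t ht0 ht1 c P hP h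
  obtain rfl : v = sp2Family := funext hv
  have traces (k : ℕ) : trace (sp2Family t ^ k) = (c : ℂ) ^ k * trace (sp2Family 0 ^ k) := by
    rw [trace_pow_eq_of_conj_eq hP h, smul_pow, trace_smul, real_smul, ofReal_pow]
  have h2 := traces 2
  have h4 := traces 4
  rw [trace_sp2Family_sq, trace_sp2Family_sq, ← ofReal_pow, ← ofReal_mul, ofReal_inj] at h2
  rw [trace_sp2Family_pow_four, trace_sp2Family_pow_four, ← ofReal_pow, ← ofReal_mul,
    ofReal_inj] at h4
  have ht2 : 0 < t ^ 2 ∧ t ^ 2 < 1 := by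
    rw [← sq_abs]
    exact ⟨by positivity, by nlinarith [abs_nonneg t]⟩
  have hroot := sq_mul_sq_sub_fifteen_eq_zero (by simpa using h2) (by simpa using h4)
  exact (mul_neg_of_pos_of_neg ht2.1 (by linarith [ht2.2])).ne hroot
end

section
/- For t ∈ ℝ, let v(t) be the 5×5 complex matrix v(t) = [[i,0,0,0,0],[0,i,0,0,0],[0,0,-i,0,0],[0,0,0,-i,t],[0,0,0,-t,0]]. Then for every t ≠ 0, every real number c, and every invertible 5×5 complex matrix P, one has P·v(t)·P⁻¹ ≠ c·v(0). In other words, for t ≠ 0 the matrix v(t) is not similar to any real scalar multiple of v(0) = diag(i,i,-i,-i,0). -/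
/-!
Conjugation preserves the determinant, and `det (v t) = i t²` vanishes exactly at `t = 0`:
every conjugate of `v t` with `t ≠ 0` is invertible, while every `c • v 0` is singular.
-/

open Matrix Complex

theorem det_su5_family (t : ℝ) :
    det !![I, 0, 0, 0, 0;
           0, I, 0, 0, 0;
           0, 0, -I, 0, 0;
           0, 0, 0, -I, (t : ℂ);
           0, 0, 0, -(t : ℂ), 0] = I * (t : ℂ) ^ 2 := by
  simp [det_succ_row_zero, Fin.sum_univ_succ]
  linear_combination (-(t : ℂ) ^ 2 * I) * I_mul_I

/-- For `t : ℝ`, let `v t = [[i,0,0,0,0],[0,i,0,0,0],[0,0,-i,0,0],[0,0,0,-i,t],[0,0,0,-t,0]]`.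
For every `t ≠ 0`, every real `c` and every invertible complex `5×5` matrix `P`, one
has `P * v t * P⁻¹ ≠ c • v 0`: the matrix `v t` is not similar to any real scalar
multiple of `v 0 = diag(i,i,-i,-i,0)`. -/
theorem su5_family_not_conjugate
    (v : ℝ → Matrix (Fin 5) (Fin 5) ℂ)
    (hv : ∀ t : ℝ, v t =
      !![I, 0, 0, 0, 0;
         0, I, 0, 0, 0;
         0, 0, -I, 0, 0;
         0, 0, 0, -I, (t : ℂ);
         0, 0, 0, -(t : ℂ), 0]) :
    ∀ t : ℝ, t ≠ 0 → ∀ c : ℝ, ∀ P : Matrix (Fin 5) (Fin 5) ℂ,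
      IsUnit P → P * v t * P⁻¹ ≠ c • v 0 := by
  intro t ht c P hP h
  have hdet := congrArg det h
  rw [det_conj hP, ← Complex.coe_smul, det_smul, hv, hv, det_su5_family, det_su5_family] at hdet
  simp [I_ne_zero, ht] at hdet
end

section
/- For t ∈ ℝ, let v(t) be the 9×9 real matrix whose only nonzero entries are v₁₂ = t, v₂₁ = -t, v₂₃ = 1, v₃₂ = -1, v₄₅ = 1, v₅₄ = -1, v₆₇ = 1, v₇₆ = -1, v₈₉ = 1, v₉₈ = -1. Then for every t ≠ 0, every real number c, and every invertible 9×9 real matrix P, one has P·v(t)·P⁻¹ ≠ c·v(0). In other words, for t ≠ 0 the antisymmetric matrix v(t) is not similar to any real scalar multiple of v(0). -/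
/-!
Traces of powers are similarity invariants, and `tr ((c • A) ^ k) = c ^ k * tr (A ^ k)`.
Here `tr (v t ^ 2) = -2t² - 8` and `tr (v t ^ 4) = 2t⁴ + 4t² + 8`. If `v t` were similar to
`c • v 0`, the first trace would force `c² = 1 + t²/4`, and the second would then read
`2t⁴ + 4t² + 8 = 8 (1 + t²/4)² = t⁴/2 + 4t² + 8`, i.e. `t = 0`.
-/

open Matrix

namespace Matrix

variable {n α : Type*} [Fintype n] [DecidableEq n] [CommRing α]

theorem trace_conj_pow {P : Matrix n n α} (hP : IsUnit P) (A : Matrix n n α) (k : ℕ) :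
    ((P * A * P⁻¹) ^ k).trace = (A ^ k).trace := by
  rw [← hP.unit_spec, ← coe_units_inv, Units.conj_pow, trace_units_conj]

theorem trace_pow_eq_of_conj_eq_smul {P A B : Matrix n n α} {c : α} (hP : IsUnit P)
    (h : P * A * P⁻¹ = c • B) (k : ℕ) : (A ^ k).trace = c ^ k * (B ^ k).trace := by
  rw [← trace_conj_pow hP, h, smul_pow, trace_smul, smul_eq_mul]

end Matrix

def spin9Family (t : ℝ) : Matrix (Fin 9) (Fin 9) ℝ :=
  !![0,  t, 0, 0, 0, 0, 0, 0, 0;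
     -t, 0, 1, 0, 0, 0, 0, 0, 0;
     0, -1, 0, 0, 0, 0, 0, 0, 0;
     0,  0, 0, 0, 1, 0, 0, 0, 0;
     0,  0, 0,-1, 0, 0, 0, 0, 0;
     0,  0, 0, 0, 0, 0, 1, 0, 0;
     0,  0, 0, 0, 0,-1, 0, 0, 0;
     0,  0, 0, 0, 0, 0, 0, 0, 1;
     0,  0, 0, 0, 0, 0, 0,-1, 0]

theorem trace_spin9Family_pow_two (t : ℝ) : (spin9Family t ^ 2).trace = -2 * t ^ 2 - 8 := by
  simp [spin9Family, sq, trace, Fin.sum_univ_succ]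
  ring

theorem trace_spin9Family_pow_four (t : ℝ) :
    (spin9Family t ^ 4).trace = 2 * t ^ 4 + 4 * t ^ 2 + 8 := by
  rw [show 4 = 2 * 2 from rfl, pow_mul]
  simp [spin9Family, sq, trace, Fin.sum_univ_succ]
  ring

theorem eq_zero_of_spin9Family_trace_relations {t c : ℝ}
    (h₂ : -2 * t ^ 2 - 8 = -8 * c ^ 2) (h₄ : 2 * t ^ 4 + 4 * t ^ 2 + 8 = 8 * c ^ 4) :
    t = 0 := by
  have hc : c ^ 2 = 1 + t ^ 2 / 4 := by linarith
  have ht : t ^ 4 = 0 := by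
    rw [show c ^ 4 = (c ^ 2) ^ 2 by ring, hc] at h₄
    linarith
  exact pow_eq_zero_iff (by norm_num) |>.mp ht

/-- For `t : ℝ`, let `v t` be the `9×9` real antisymmetric matrix whose only nonzero
entries are `v₁₂ = t`, `v₂₁ = -t`, `v₂₃ = 1`, `v₃₂ = -1`, `v₄₅ = 1`, `v₅₄ = -1`,
`v₆₇ = 1`, `v₇₆ = -1`, `v₈₉ = 1`, `v₉₈ = -1`.  For every `t ≠ 0`, every real `c` and
every invertible real `9×9` matrix `P`, one has `P * v t * P⁻¹ ≠ c • v 0`: the matrix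
`v t` is not similar to any real scalar multiple of `v 0`. -/
theorem spin9_family_not_conjugate
    (v : ℝ → Matrix (Fin 9) (Fin 9) ℝ)
    (hv : ∀ t : ℝ, v t =
      !![0,  t, 0, 0, 0, 0, 0, 0, 0;
         -t, 0, 1, 0, 0, 0, 0, 0, 0;
         0, -1, 0, 0, 0, 0, 0, 0, 0;
         0,  0, 0, 0, 1, 0, 0, 0, 0;
         0,  0, 0,-1, 0, 0, 0, 0, 0;
         0,  0, 0, 0, 0, 0, 1, 0, 0;
         0,  0, 0, 0, 0,-1, 0, 0, 0;
         0,  0, 0, 0, 0, 0, 0, 0, 1;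
         0,  0, 0, 0, 0, 0, 0,-1, 0]) :
    ∀ t : ℝ, t ≠ 0 → ∀ c : ℝ, ∀ P : Matrix (Fin 9) (Fin 9) ℝ,
      IsUnit P → P * v t * P⁻¹ ≠ c • v 0 := by
  obtain rfl : v = spin9Family := funext hv
  intro t ht c P hP h
  have h₂ := trace_pow_eq_of_conj_eq_smul hP h 2
  have h₄ := trace_pow_eq_of_conj_eq_smul hP h 4
  rw [trace_spin9Family_pow_two, trace_spin9Family_pow_two] at h₂
  rw [trace_spin9Family_pow_four, trace_spin9Family_pow_four] at h₄
  exact ht (eq_zero_of_spin9Family_trace_relations (by linarith) (by linarith))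
end

section
/- Let n > 2 and, for t ∈ ℝ, let v(t) be the n×n complex matrix whose diagonal entries are -i in positions (1,1),…,(n-1,n-1) and (n-1)·i in position (n,n), whose entry in position (n-1,n) is t and in position (n,n-1) is -t, and whose all other entries are zero. Then for every t ≠ 0, every real number c, and every invertible n×n complex matrix P, one has P·v(t)·P⁻¹ ≠ c·v(0). In other words, for t ≠ 0 the matrix v(t) is not similar to any real scalar multiple of v(0) = diag(-i,…,-i,(n-1)i). -/
/-!
`c • v 0` is diagonal with eigenvalues `-c i` and `(n - 1) c i`, so it is annihilated by
`(X + c i) (X - (n - 1) c i)`, and so is every matrix similar to it. Since row `n - 1` of `v t`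
is supported in columns `n - 1` and `n`, the `(n - 1, n)` and `(n - 1, n - 1)` entries of this
polynomial evaluated at `v t` are easy to compute: the first is `(1 - c) (n - 2) t i`, forcing
`c = 1`, and the second is then `-t²`.
-/

open Matrix Complex Polynomial

theorem Polynomial.aeval_units_conj {K A : Type*} [CommSemiring K] [Semiring A] [Algebra K A]
    (u : Aˣ) (a : A) (f : K[X]) : aeval (u * a * ↑u⁻¹) f = u * aeval a f * ↑u⁻¹ := by
  induction f using Polynomial.induction_on' with
  | add f g hf hg => rw [map_add, map_add, hf, hg, mul_add, add_mul]
  | monomial k r =>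
    simp only [aeval_monomial, Units.conj_pow, ← Algebra.smul_def, mul_smul_comm, smul_mul_assoc]

namespace Matrix

variable {ι : Type*} [Fintype ι]

theorem aeval_eq_zero_of_conj [DecidableEq ι] {K : Type*} [CommRing K]
    {P A B : Matrix ι ι K} {f : K[X]} (hP : IsUnit P) (h : P * A * P⁻¹ = B)
    (hB : aeval B f = 0) : aeval A f = 0 := by
  obtain ⟨u, rfl⟩ := hP
  have hA : A = (u⁻¹).val * B * (u⁻¹)⁻¹.val := by
    rw [inv_inv, ← h, coe_units_inv]
    simp [← mul_assoc]
  rw [hA, aeval_units_conj, hB, mul_zero, zero_mul]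

theorem aeval_diagonal [DecidableEq ι] {K R : Type*} [CommSemiring K] [CommSemiring R]
    [Algebra K R] (d : ι → R) (f : K[X]) :
    aeval (diagonal d) f = diagonal fun i => aeval (d i) f := by
  rw [← diagonalAlgHom_apply (R := K), aeval_algHom_apply, aeval_pi_apply, diagonalAlgHom_apply]

theorem mul_apply_eq_add_of_row_supported {R : Type*} [NonUnitalNonAssocSemiring R]
    {M N : Matrix ι ι R} {i p q : ι} (hpq : p ≠ q) (hM : ∀ k, k ≠ p → k ≠ q → M i k = 0)
    (j : ι) : (M * N) i j = M i p * N p j + M i q * N q j :=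
  Fintype.sum_eq_add p q hpq fun k hk => by simp only [hM k hk.1 hk.2, zero_mul]

end Matrix

def sunFamily (n : ℕ) (t : ℝ) : Matrix (Fin n) (Fin n) ℂ :=
  Matrix.of fun i j : Fin n =>
    if i = j then (if (i : ℕ) = n - 1 then ((n : ℂ) - 1) * I else -I)
    else if (i : ℕ) = n - 2 ∧ (j : ℕ) = n - 1 then (t : ℂ)
    else if (i : ℕ) = n - 1 ∧ (j : ℕ) = n - 2 then -(t : ℂ)
    else 0

noncomputable def sunAnnihilator (n : ℕ) (c : ℝ) : ℂ[X] :=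
  (X + C (c * I)) * (X - C (c * ((n : ℂ) - 1) * I))

theorem sunFamily_zero (n : ℕ) :
    sunFamily n 0 = diagonal fun i : Fin n => if (i : ℕ) = n - 1 then ((n : ℂ) - 1) * I else -I := by
  ext i j
  by_cases hij : i = j
  · subst hij
    simp [sunFamily]
  · simp [sunFamily, hij]

theorem aeval_smul_sunFamily_zero_sunAnnihilator (n : ℕ) (c : ℝ) :
    aeval (c • sunFamily n 0) (sunAnnihilator n c) = 0 := by
  rw [sunFamily_zero, ← diagonal_smul, aeval_diagonal, diagonal_eq_zero]
  ext i
  simp only [Pi.smul_apply, Pi.zero_apply, sunAnnihilator]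
  split_ifs <;> simp only [map_mul, map_add, map_sub, aeval_X, aeval_C, Algebra.algebraMap_self,
    RingHom.id_apply, Complex.real_smul] <;> ring

section Penultimate

variable (m : ℕ) (t : ℝ)

theorem sunFamily_apply_castSucc_last (k : Fin (m + 2)) :
    sunFamily (m + 2) t (Fin.last m).castSucc k =
      if k = (Fin.last m).castSucc then -I else if k = Fin.last (m + 1) then (t : ℂ) else 0 := by
  simp only [sunFamily, of_apply, Fin.val_castSucc, Fin.val_last, Fin.ext_iff]
  split_ifs <;> first | rfl | omega

theorem sunFamily_apply_last_castSucc :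
    sunFamily (m + 2) t (Fin.last (m + 1)) (Fin.last m).castSucc = -(t : ℂ) := by
  simp [sunFamily, Fin.ext_iff]

theorem sunFamily_apply_last_last :
    sunFamily (m + 2) t (Fin.last (m + 1)) (Fin.last (m + 1)) = ((m : ℂ) + 1) * I := by
  rw [sunFamily, of_apply, if_pos rfl, if_pos (by simp)]
  push_cast
  ring

theorem aeval_sunFamily_sunAnnihilator_ne_zero (hm : m ≠ 0) (ht : t ≠ 0) (c : ℝ) :
    aeval (sunFamily (m + 2) t) (sunAnnihilator (m + 2) c) ≠ 0 := by
  intro h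
  rw [sunAnnihilator, map_mul, map_add, map_sub, aeval_X, aeval_C, aeval_C] at h
  have hpq : (Fin.last m).castSucc ≠ Fin.last (m + 1) := Fin.castSucc_ne_last _
  have hrow := mul_apply_eq_add_of_row_supported (i := (Fin.last m).castSucc) hpq
    (M := sunFamily (m + 2) t + algebraMap ℂ _ (c * I))
    (N := sunFamily (m + 2) t - algebraMap ℂ _ (c * (((m + 2 : ℕ) : ℂ) - 1) * I))
    (fun k hkp hkq => by
      simp only [Matrix.add_apply, algebraMap_matrix_apply, sunFamily_apply_castSucc_last,
        if_neg hkp, if_neg hkq, if_neg (Ne.symm hkp), add_zero])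
  have hpq' := congrFun₂ h (Fin.last m).castSucc (Fin.last (m + 1))
  have hpp' := congrFun₂ h (Fin.last m).castSucc (Fin.last m).castSucc
  simp only [hrow, Matrix.add_apply, Matrix.sub_apply, algebraMap_matrix_apply,
    Algebra.algebraMap_self, RingHom.id_apply, sunFamily_apply_castSucc_last,
    sunFamily_apply_last_castSucc, sunFamily_apply_last_last, if_pos, if_neg hpq,
    if_neg (Ne.symm hpq), Matrix.zero_apply] at hpq' hpp'
  push_cast at hpq' hpp'
  have hc : (c : ℂ) = 1 := by
    have : ((c : ℂ) - 1) * t * m * I = 0 := by linear_combination -hpq'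
    simpa [sub_eq_zero, ht, hm] using this
  rw [hc] at hpp'
  have htt : (t : ℂ) * t = 0 := by linear_combination -hpp'
  exact ht (by exact_mod_cast mul_self_eq_zero.mp htt)

end Penultimate

/-- Let `n > 2` and, for `t : ℝ`, let `v t` be the `n×n` complex matrix with diagonal
entries `-i` in positions `1,…,n-1` and `(n-1)i` in position `n`, entry `t` in
position `(n-1, n)`, entry `-t` in position `(n, n-1)`, and zeros elsewhere (here
positions are 1-indexed; below indices are 0-indexed).  For every `t ≠ 0`, every real
`c` and every invertible complex matrix `P`, one has `P * v t * P⁻¹ ≠ c • v 0`: the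
matrix `v t` is not similar to any real scalar multiple of
`v 0 = diag(-i,…,-i,(n-1)i)`. -/
theorem sun_family_not_conjugate
    (n : ℕ) (hn : 2 < n)
    (v : ℝ → Matrix (Fin n) (Fin n) ℂ)
    (hv : ∀ t : ℝ, v t = Matrix.of fun i j : Fin n =>
      if i = j then (if (i : ℕ) = n - 1 then ((n : ℂ) - 1) * I else -I)
      else if (i : ℕ) = n - 2 ∧ (j : ℕ) = n - 1 then (t : ℂ)
      else if (i : ℕ) = n - 1 ∧ (j : ℕ) = n - 2 then -(t : ℂ)
      else 0) :
    ∀ t : ℝ, t ≠ 0 → ∀ c : ℝ, ∀ P : Matrix (Fin n) (Fin n) ℂ,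
      IsUnit P → P * v t * P⁻¹ ≠ c • v 0 := by
  obtain rfl : v = sunFamily n := funext hv
  intro t ht c P hP h
  obtain ⟨m, rfl⟩ : ∃ m, n = m + 2 := ⟨n - 2, by omega⟩
  exact aeval_sunFamily_sunAnnihilator_ne_zero m t (by omega) ht c
    (aeval_eq_zero_of_conj hP h (aeval_smul_sunFamily_zero_sunAnnihilator (m + 2) c))
end

section
/- Let n > 1 and, for t ∈ ℝ, let v(t) be the 2n×2n complex matrix all of whose entries are zero except the bottom-right 4×4 block, which equals [[0,0,0,t],[0,0,-t,0],[0,t,i,0],[-t,0,0,-i]]. Then for every t ≠ 0, every real number c, and every invertible 2n×2n complex matrix P, one has P·v(t)·P⁻¹ ≠ c·v(0). In other words, for t ≠ 0 the matrix v(t) is not similar to any real scalar multiple of v(0). -/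
open Matrix Complex

/-!
`c • v 0` is diagonal with eigenvalues `0, ± i c`, so it satisfies `X ^ 3 = -c ^ 2 • X`, and such an
identity passes to every matrix similar to it. Both `v t` and `v 0` are a `4 × 4` block padded by
zeros, so the identity for `v t` would already hold for its block; but the cube of the block has
entry `i t ^ 2` at the corner where the block itself vanishes.
-/

namespace Matrix

theorem pow_eq_smul_of_conj {R K ι : Type*} [CommSemiring R] [CommRing K] [Algebra R K]
    [Fintype ι] [DecidableEq ι] {P M N : Matrix ι ι K} (hP : IsUnit P) (h : P * M * P⁻¹ = N)
    {k : ℕ} {a : R} (hN : N ^ k = a • N) : M ^ k = a • M := by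
  obtain ⟨u, rfl⟩ := hP
  rw [← coe_units_inv] at h
  have hM : M = (↑u⁻¹ : Matrix ι ι K) * N * u := by simp [← h, mul_assoc]
  rw [hM, Units.conj_pow', hN, mul_smul_comm, smul_mul_assoc]

section PadLowerRight

variable {α ι m n : Type*}

def padLowerRight [Zero α] (e : m ⊕ n ≃ ι) (D : Matrix n n α) : Matrix ι ι α :=
  reindex e e (fromBlocks 0 0 0 D)

theorem padLowerRight_apply [Zero α] (e : m ⊕ n ≃ ι) (D : Matrix n n α) (x y : m ⊕ n) :
    padLowerRight e D (e x) (e y) = fromBlocks 0 0 0 D x y := by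
  simp [padLowerRight]

theorem padLowerRight_injective [Zero α] (e : m ⊕ n ≃ ι) :
    Function.Injective (padLowerRight (α := α) e) :=
  fun _ _ h => (fromBlocks_inj.mp ((reindex e e).injective h)).2.2.2

theorem smul_padLowerRight {R : Type*} [Zero α] [SMulZeroClass R α] (e : m ⊕ n ≃ ι) (c : R)
    (D : Matrix n n α) : c • padLowerRight e D = padLowerRight e (c • D) := by
  ext i j
  rcases h : e.symm i with x | x <;> rcases h' : e.symm j with y | y <;>
    simp [padLowerRight, h, h']

variable [Semiring α] [Fintype m] [Fintype n] [Fintype ι] [DecidableEq m] [DecidableEq n]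
  [DecidableEq ι]

theorem padLowerRight_pow (e : m ⊕ n ≃ ι) (D : Matrix n n α) {k : ℕ} (hk : k ≠ 0) :
    padLowerRight e D ^ k = padLowerRight e (D ^ k) := by
  rw [padLowerRight, padLowerRight, ← coe_reindexAlgEquiv ℕ, ← map_pow, coe_reindexAlgEquiv,
    fromBlocks_diagonal_pow, zero_pow hk]

theorem padLowerRight_pow_eq_smul_iff {R : Type*} [SMulZeroClass R α] (e : m ⊕ n ≃ ι)
    (D : Matrix n n α) {k : ℕ} (hk : k ≠ 0) (a : R) :
    padLowerRight e D ^ k = a • padLowerRight e D ↔ D ^ k = a • D := by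
  rw [padLowerRight_pow e D hk, smul_padLowerRight, (padLowerRight_injective e).eq_iff]

end PadLowerRight

end Matrix

def finSubSumEquiv {k m : ℕ} (hk : k ≤ m) : Fin (m - k) ⊕ Fin k ≃ Fin m :=
  finSumFinEquiv.trans (finCongr (Nat.sub_add_cancel hk))

-- Not proved by `rfl`: as `dsimp` lemmas these would leave the `Decidable` instances of the
-- `if`s in `spFamily` ill-typed.
theorem val_finSubSumEquiv_inl {k m : ℕ} (hk : k ≤ m) (x : Fin (m - k)) :
    (finSubSumEquiv hk (.inl x) : ℕ) = x := by
  simp [finSubSumEquiv]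

theorem val_finSubSumEquiv_inr {k m : ℕ} (hk : k ≤ m) (x : Fin k) :
    (finSubSumEquiv hk (.inr x) : ℕ) = m - k + x := by
  simp [finSubSumEquiv]

def spBlock (t : ℝ) : Matrix (Fin 4) (Fin 4) ℂ :=
  !![0, 0, 0, t; 0, 0, -t, 0; 0, t, I, 0; -t, 0, 0, -I]

theorem smul_spBlock_zero_pow_three (c : ℝ) :
    (c • spBlock 0) ^ 3 = (-c ^ 2) • (c • spBlock 0) := by
  ext i j
  fin_cases i <;> fin_cases j <;> simp [spBlock, pow_succ, mul_apply, Fin.sum_univ_four] <;>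
    ring_nf <;> simp

theorem spBlock_pow_three_apply_zero_zero (t : ℝ) : (spBlock t ^ 3) 0 0 = I * t ^ 2 := by
  simp [spBlock, pow_succ, mul_apply, Fin.sum_univ_four]
  ring

theorem spBlock_pow_three_ne_smul {t : ℝ} (ht : t ≠ 0) (a : ℝ) :
    spBlock t ^ 3 ≠ a • spBlock t := by
  intro h
  have h₀₀ := congrFun₂ h 0 0
  rw [spBlock_pow_three_apply_zero_zero] at h₀₀
  simp [spBlock] at h₀₀
  exact ht h₀₀

def spFamily (m : ℕ) (t : ℝ) : Matrix (Fin m) (Fin m) ℂ :=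
  of fun i j : Fin m =>
    if (i : ℕ) = m - 4 ∧ (j : ℕ) = m - 1 then (t : ℂ)
    else if (i : ℕ) = m - 3 ∧ (j : ℕ) = m - 2 then -(t : ℂ)
    else if (i : ℕ) = m - 2 ∧ (j : ℕ) = m - 3 then (t : ℂ)
    else if (i : ℕ) = m - 2 ∧ (j : ℕ) = m - 2 then I
    else if (i : ℕ) = m - 1 ∧ (j : ℕ) = m - 4 then -(t : ℂ)
    else if (i : ℕ) = m - 1 ∧ (j : ℕ) = m - 1 then -I
    else 0

theorem spFamily_eq_padLowerRight {m : ℕ} (hm : 4 ≤ m) (t : ℝ) :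
    spFamily m t = padLowerRight (finSubSumEquiv hm) (spBlock t) := by
  ext i j
  obtain ⟨x, rfl⟩ := (finSubSumEquiv hm).surjective i
  obtain ⟨y, rfl⟩ := (finSubSumEquiv hm).surjective j
  rw [padLowerRight_apply, spFamily, of_apply]
  rcases x with x | x <;> rcases y with y | y
  case inr.inr =>
    fin_cases x <;> fin_cases y <;>
      simp (disch := omega) [val_finSubSumEquiv_inr, if_pos, if_neg, spBlock]
  all_goals simp (disch := omega) [val_finSubSumEquiv_inl, val_finSubSumEquiv_inr, if_neg]

/-- Let `n > 1` and, for `t : ℝ`, let `v t` be the `2n×2n` complex matrix which is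
zero except for its bottom-right `4×4` block, equal to
`[[0,0,0,t],[0,0,-t,0],[0,t,i,0],[-t,0,0,-i]]` (indices below are 0-indexed, so the
block occupies rows and columns `2n-4,…,2n-1`).  For every `t ≠ 0`, every real `c`
and every invertible complex matrix `P`, one has `P * v t * P⁻¹ ≠ c • v 0`: the
matrix `v t` is not similar to any real scalar multiple of `v 0`. -/
theorem spn_family_not_conjugate
    (n : ℕ) (hn : 1 < n)
    (v : ℝ → Matrix (Fin (2 * n)) (Fin (2 * n)) ℂ)
    (hv : ∀ t : ℝ, v t = Matrix.of fun i j : Fin (2 * n) =>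
      if (i : ℕ) = 2 * n - 4 ∧ (j : ℕ) = 2 * n - 1 then (t : ℂ)
      else if (i : ℕ) = 2 * n - 3 ∧ (j : ℕ) = 2 * n - 2 then -(t : ℂ)
      else if (i : ℕ) = 2 * n - 2 ∧ (j : ℕ) = 2 * n - 3 then (t : ℂ)
      else if (i : ℕ) = 2 * n - 2 ∧ (j : ℕ) = 2 * n - 2 then I
      else if (i : ℕ) = 2 * n - 1 ∧ (j : ℕ) = 2 * n - 4 then -(t : ℂ)
      else if (i : ℕ) = 2 * n - 1 ∧ (j : ℕ) = 2 * n - 1 then -I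
      else 0) :
    ∀ t : ℝ, t ≠ 0 → ∀ c : ℝ, ∀ P : Matrix (Fin (2 * n)) (Fin (2 * n)) ℂ,
      IsUnit P → P * v t * P⁻¹ ≠ c • v 0 := by
  intro t ht c P hP hconj
  have hm : 4 ≤ 2 * n := by omega
  have hv_pad (s : ℝ) : v s = padLowerRight (finSubSumEquiv hm) (spBlock s) :=
    (hv s).trans (spFamily_eq_padLowerRight hm s)
  have hcube₀ : (c • v 0) ^ 3 = (-c ^ 2) • (c • v 0) := by
    rw [hv_pad, smul_padLowerRight, padLowerRight_pow_eq_smul_iff _ _ three_ne_zero]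
    exact smul_spBlock_zero_pow_three c
  have hcube := pow_eq_smul_of_conj hP hconj hcube₀
  rw [hv_pad, padLowerRight_pow_eq_smul_iff _ _ three_ne_zero] at hcube
  exact spBlock_pow_three_ne_smul ht _ hcube
end
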